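/- arXiv:2203.08524 — 4 statements merged into one kernel-verified Lean document; each statement's English description precedes it below -/
import Mathlib

section
/- (Krein–Milman type decomposition for types) Let 𝒜 be a finite set, ξ a probability distribution on 𝒜, and ℓ ≥ 1 an integer. Define Π(ξ, ℓ) = {V probability distribution on 𝒜 : ⌊ℓξ_j⌋/ℓ ≤ V(j) ≤ ⌈ℓξ_j⌉/ℓ for all j}. Then there exist K ≤ 2^{|𝒜|} empirical distributions P^{(1)}, …, P^{(K)} of denominator ℓ (types of order ℓ) in Π(ξ, ℓ) such that every P ∈ Π(ξ, ℓ), in particular ξ itself, is a convex combination of P^{(1)}, …, P^{(K)}. -/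
/-!
Π(ξ, ℓ) is the slice of the box `∏ⱼ [⌊ℓξⱼ⌋/ℓ, ⌈ℓξⱼ⌉/ℓ]` by the hyperplane `∑ V = 1`, a compact
convex set, so by Krein–Milman it is the convex hull of its extreme points. At an extreme point
at most one coordinate lies strictly inside its interval, since otherwise mass could be shifted
between two such coordinates in both directions. All other coordinates are then in `ℤ/ℓ`, so the
remaining one is too (the sum is `1`), and as the intervals have length at most `1/ℓ` it is also
an endpoint. Hence every extreme point is a type of order `ℓ` with each coordinate at one of two
values, leaving at most `2^|A|` of them.
-/

open Finset

section BoxSlice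

variable {ι : Type*} [Fintype ι]

def boxSlice (l u : ι → ℝ) (s : ℝ) : Set (ι → ℝ) :=
  Set.univ.pi (fun j => Set.Icc (l j) (u j)) ∩ {V | ∑ j, V j = s}

variable {l u : ι → ℝ} {s : ℝ}

lemma convex_boxSlice : Convex ℝ (boxSlice l u s) :=
  (convex_pi fun j _ => convex_Icc (l j) (u j)).inter <|
    convex_hyperplane ⟨fun _ _ => sum_add_distrib, fun c V => by simp [mul_sum]⟩ s

lemma isCompact_boxSlice : IsCompact (boxSlice l u s) :=
  (isCompact_univ_pi fun _ => isCompact_Icc).inter_right <|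
    isClosed_eq (continuous_finsetSum _ fun j _ => continuous_apply j) continuous_const

lemma add_smul_single_sub_single_mem_boxSlice [DecidableEq ι] {V : ι → ℝ}
    (hV : V ∈ boxSlice l u s) {i j : ι} (hij : i ≠ j) {ε : ℝ}
    (hi : V i + ε ∈ Set.Icc (l i) (u i)) (hj : V j - ε ∈ Set.Icc (l j) (u j)) :
    V + ε • (Pi.single i 1 - Pi.single j 1) ∈ boxSlice l u s := by
  refine ⟨fun k _ => ?_, ?_⟩
  · rcases eq_or_ne k i with rfl | hki
    · simpa [hij, sub_eq_add_neg] using hi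
    rcases eq_or_ne k j with rfl | hkj
    · simpa [hki, sub_eq_add_neg] using hj
    simpa [hki, hkj] using hV.1 k trivial
  · have hs : ∑ k, V k = s := hV.2
    simp [sum_add_distrib, ← mul_sum, sum_sub_distrib, hs]

lemma subsingleton_of_mem_extremePoints_boxSlice {V : ι → ℝ}
    (hV : V ∈ (boxSlice l u s).extremePoints ℝ) :
    {j | V j ∈ Set.Ioo (l j) (u j)}.Subsingleton := by
  classical
  rintro i ⟨hil, hiu⟩ j ⟨hjl, hju⟩
  by_contra hij
  set t := min (min (V i - l i) (u i - V i)) (min (V j - l j) (u j - V j))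
  have ht : 0 < t := by simp only [t, lt_min_iff, sub_pos]; exact ⟨⟨hil, hiu⟩, hjl, hju⟩
  have hti : t ≤ V i - l i ∧ t ≤ u i - V i := le_min_iff.mp (min_le_left _ _)
  have htj : t ≤ V j - l j ∧ t ≤ u j - V j := le_min_iff.mp (min_le_right _ _)
  set d : ι → ℝ := t • (Pi.single i 1 - Pi.single j 1)
  have hplus : V + d ∈ boxSlice l u s :=
    add_smul_single_sub_single_mem_boxSlice hV.1 hij
      ⟨by linarith, by linarith⟩ ⟨by linarith, by linarith⟩
  have hminus : V - d ∈ boxSlice l u s := by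
    rw [sub_eq_add_neg, ← neg_smul]
    exact add_smul_single_sub_single_mem_boxSlice hV.1 hij
      ⟨by linarith, by linarith⟩ ⟨by linarith, by linarith⟩
  have hd : d = 0 := by
    simpa using ((mem_extremePoints.mp hV).2 _ hminus _ hplus (mem_openSegment_sub_add V d)).2
  have := congrFun hd i
  simp [d, hij] at this
  exact ht.ne' this

lemma boxSlice_eq_setOf (hl : 0 ≤ l) :
    boxSlice l u s = {V | (∀ j, 0 ≤ V j) ∧ ∑ j, V j = s ∧ ∀ j, l j ≤ V j ∧ V j ≤ u j} := by
  ext V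
  simp only [boxSlice, Set.mem_inter_iff, Set.mem_univ_pi, Set.mem_Icc, Set.mem_ofPred_eq]
  exact ⟨fun ⟨hb, hs⟩ => ⟨fun j => (hl j).trans (hb j).1, hs, hb⟩, fun ⟨_, hs, hb⟩ => ⟨hb, hs⟩⟩

lemma AddSubgroup.mem_of_sum_mem_of_forall_ne {M : Type*} [AddCommGroup M] (G : AddSubgroup M)
    {x : ι → M} (hsum : ∑ j, x j ∈ G) (j₀ : ι) (h : ∀ j ≠ j₀, x j ∈ G) : x j₀ ∈ G := by
  classical
  rw [← add_sum_erase _ _ (mem_univ j₀)] at hsum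
  exact (G.add_mem_cancel_right (G.sum_mem fun j hj => h j (ne_of_mem_erase hj))).mp hsum

lemma eq_or_eq_of_mem_boxSlice_of_subsingleton {ℓ : ℕ} (hℓ : 0 < ℓ) {a b : ι → ℤ}
    (hab : ∀ j, b j ≤ a j + 1) {W : ι → ℝ}
    (hW : W ∈ boxSlice (fun j => (a j : ℝ) / ℓ) (fun j => (b j : ℝ) / ℓ) 1)
    (hsub : {j | W j ∈ Set.Ioo ((a j : ℝ) / ℓ) ((b j : ℝ) / ℓ)}.Subsingleton) (j : ι) :
    W j = a j / ℓ ∨ W j = b j / ℓ := by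
  have hℓ' : (0 : ℝ) < ℓ := by exact_mod_cast hℓ
  let G := (Int.castAddHom ℝ).range
  have hcoord (k : ι) : W k = a k / ℓ ∨ W k = b k / ℓ ∨
      W k ∈ Set.Ioo ((a k : ℝ) / ℓ) ((b k : ℝ) / ℓ) :=
    Set.eq_endpoints_or_mem_Ioo_of_mem_Icc (hW.1 k trivial)
  by_contra! hne
  have hj : W j ∈ Set.Ioo ((a j : ℝ) / ℓ) ((b j : ℝ) / ℓ) :=
    ((hcoord j).resolve_left hne.1).resolve_left hne.2
  have hlattice : ∀ k ≠ j, ℓ * W k ∈ G := by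
    intro k hk
    rcases hcoord k with h | h | h
    · exact ⟨a k, by simp [h, mul_div_cancel₀ _ hℓ'.ne']⟩
    · exact ⟨b k, by simp [h, mul_div_cancel₀ _ hℓ'.ne']⟩
    · exact absurd (hsub h hj) hk
  have hsum : ∑ k, ℓ * W k ∈ G := ⟨ℓ, by simp [← mul_sum, hW.2.out]⟩
  obtain ⟨m, hm⟩ := G.mem_of_sum_mem_of_forall_ne hsum j hlattice
  replace hm : (m : ℝ) = ℓ * W j := hm
  have ham : a j < m := by
    have := (div_lt_iff₀ hℓ').mp hj.1
    exact_mod_cast (by linarith : (a j : ℝ) < m)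
  have hmb : m < b j := by
    have := (lt_div_iff₀ hℓ').mp hj.2
    exact_mod_cast (by linarith : (m : ℝ) < b j)
  linarith [hab j]

lemma extremePoints_boxSlice_subset_piFinset [DecidableEq ι] {ℓ : ℕ} (hℓ : 0 < ℓ) {a b : ι → ℤ}
    (hab : ∀ j, b j ≤ a j + 1) :
    (boxSlice (fun j => (a j : ℝ) / ℓ) (fun j => (b j : ℝ) / ℓ) 1).extremePoints ℝ ⊆
      Fintype.piFinset fun j => {(a j : ℝ) / ℓ, (b j : ℝ) / ℓ} := fun _ hW => by
  simpa using eq_or_eq_of_mem_boxSlice_of_subsingleton hℓ hab (extremePoints_subset hW)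
    (subsingleton_of_mem_extremePoints_boxSlice hW)

end BoxSlice

lemma card_piFinset_pair_le {ι α : Type*} [Fintype ι] [DecidableEq ι] [DecidableEq α]
    (x y : ι → α) : #(Fintype.piFinset fun j => {x j, y j}) ≤ 2 ^ Fintype.card ι := by
  rw [Fintype.card_piFinset]
  exact prod_le_pow_card _ _ _ fun _ _ => card_le_two

lemma convexHull_extremePoints_eq_of_finite {E : Type*} [AddCommGroup E] [Module ℝ E]
    [TopologicalSpace E] [T2Space E] [IsTopologicalAddGroup E] [ContinuousSMul ℝ E]
    [LocallyConvexSpace ℝ E] {s : Set E} (hcomp : IsCompact s) (hconv : Convex ℝ s)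
    (hfin : (s.extremePoints ℝ).Finite) : convexHull ℝ (s.extremePoints ℝ) = s := by
  rw [← (hfin.isClosed_convexHull ℝ).closure_eq]
  exact closure_convexHull_extremePoints hcomp hconv

lemma Finset.exists_fin_weights_of_mem_convexHull {E : Type*} [AddCommGroup E] [Module ℝ E]
    {F : Finset E} {x : E} (hx : x ∈ convexHull ℝ (F : Set E)) :
    ∃ α : Fin #F → ℝ, (∀ k, 0 ≤ α k) ∧ ∑ k, α k = 1 ∧ ∑ k, α k • (F.equivFin.symm k : E) = x := by
  obtain ⟨w, hw0, hw1, hwx⟩ := mem_convexHull'.mp hx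
  refine ⟨fun k => w (F.equivFin.symm k), fun k => hw0 _ (F.equivFin.symm k).2, ?_, ?_⟩
  · rw [Equiv.sum_comp F.equivFin.symm (fun y : F => w y), sum_coe_sort F w, hw1]
  · rw [Equiv.sum_comp F.equivFin.symm (fun y : F => w y • (y : E)),
      sum_coe_sort F (fun y => w y • y), hwx]

theorem stmt_9_general {A : Type} [Fintype A]
    (ξ : A → ℝ) (hξ0 : ∀ j, 0 ≤ ξ j)
    (ℓ : ℕ) (hℓ : 1 ≤ ℓ)
    (Pi : Set (A → ℝ))
    (hPi : Pi = {V | (∀ j, 0 ≤ V j) ∧ (∑ j, V j = 1) ∧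
      ∀ j, ((⌊(ℓ : ℝ) * ξ j⌋ : ℝ) / ℓ ≤ V j ∧ V j ≤ (⌈(ℓ : ℝ) * ξ j⌉ : ℝ) / ℓ)}) :
    ∃ K : ℕ, K ≤ 2 ^ (Fintype.card A) ∧
      ∃ P : Fin K → (A → ℝ),
        (∀ k, P k ∈ Pi ∧ ∀ j, ∃ m : ℕ, P k j = (m : ℝ) / ℓ) ∧
        ∀ V ∈ Pi, ∃ α : Fin K → ℝ,
          (∀ k, 0 ≤ α k) ∧ (∑ k, α k = 1) ∧ ∀ j, V j = ∑ k, α k * P k j := by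
  classical
  set a : A → ℤ := fun j => ⌊(ℓ : ℝ) * ξ j⌋
  set b : A → ℤ := fun j => ⌈(ℓ : ℝ) * ξ j⌉
  have ha : ∀ j, 0 ≤ a j := fun j => Int.floor_nonneg.mpr (by have := hξ0 j; positivity)
  have hPi_eq : Pi = boxSlice (fun j => (a j : ℝ) / ℓ) (fun j => (b j : ℝ) / ℓ) 1 :=
    hPi.trans (boxSlice_eq_setOf fun j => by have := ha j; positivity).symm
  have hext := extremePoints_boxSlice_subset_piFinset hℓ
    fun j => Int.ceil_le_floor_add_one ((ℓ : ℝ) * ξ j)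
  rw [← hPi_eq] at hext
  have hfin := (Fintype.piFinset _).finite_toSet.subset hext
  set F := hfin.toFinset
  refine ⟨#F, (card_le_card (Set.Finite.toFinset_subset.mpr hext)).trans
    (card_piFinset_pair_le _ _), fun k => F.equivFin.symm k, fun k => ?_, fun V hV => ?_⟩
  · have hk := hfin.mem_toFinset.mp (F.equivFin.symm k).2
    refine ⟨extremePoints_subset hk, fun j => ?_⟩
    have hnat (n : ℤ) (hn : 0 ≤ n) : ∃ m : ℕ, (n : ℝ) / (ℓ : ℝ) = m / ℓ :=
      ⟨n.toNat, by rw [← Int.cast_natCast (R := ℝ) n.toNat, Int.toNat_of_nonneg hn]⟩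
    dsimp only
    rcases (by simpa using Fintype.mem_piFinset.mp (hext hk) j) with h | h <;> rw [h]
    · exact hnat _ (ha j)
    · exact hnat _ ((ha j).trans (Int.floor_le_ceil _))
  · rw [← convexHull_extremePoints_eq_of_finite (hPi_eq ▸ isCompact_boxSlice)
      (hPi_eq ▸ convex_boxSlice) hfin, ← hfin.coe_toFinset] at hV
    obtain ⟨α, hα0, hα1, hαV⟩ := Finset.exists_fin_weights_of_mem_convexHull hV
    exact ⟨α, hα0, hα1, fun j => by simp [F, ← hαV, Finset.sum_apply]⟩

/-- Krein–Milman type decomposition for types: every distribution in the box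
Π(ξ, ℓ) (in particular ξ itself) is a convex combination of at most 2^{|A|}
types of order ℓ lying in Π(ξ, ℓ). -/
theorem stmt_9 {A : Type} [Fintype A]
    (ξ : A → ℝ) (hξ0 : ∀ j, 0 ≤ ξ j) (hξ1 : ∑ j, ξ j = 1)
    (ℓ : ℕ) (hℓ : 1 ≤ ℓ)
    (Pi : Set (A → ℝ))
    (hPi : Pi = {V | (∀ j, 0 ≤ V j) ∧ (∑ j, V j = 1) ∧
      ∀ j, ((⌊(ℓ : ℝ) * ξ j⌋ : ℝ) / ℓ ≤ V j ∧ V j ≤ (⌈(ℓ : ℝ) * ξ j⌉ : ℝ) / ℓ)}) :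
    ∃ K : ℕ, K ≤ 2 ^ (Fintype.card A) ∧
      ∃ P : Fin K → (A → ℝ),
        (∀ k, P k ∈ Pi ∧ ∀ j, ∃ m : ℕ, P k j = (m : ℝ) / ℓ) ∧
        ∀ V ∈ Pi, ∃ α : Fin K → ℝ,
          (∀ k, 0 ≤ α k) ∧ (∑ k, α k = 1) ∧ ∀ j, V j = ∑ k, α k * P k j :=
  stmt_9_general ξ hξ0 ℓ hℓ Pi hPi
end

section
/- Let 𝒜, ℬ be finite sets, ℓ ≥ 1 an integer, Q_A a type of order ℓ on 𝒜, and V_{B|A} any conditional distribution from 𝒜 to ℬ. Then there exist K ≤ |𝒜|·2^{|ℬ|} joint types P^{(1)}_{AB}, …, P^{(K)}_{AB} of order ℓ on 𝒜 × ℬ and convex weights β_1,…,β_K such that Q_A × V_{B|A} = Σ_j β_j P^{(j)}_{AB}, and each P^{(j)}_{AB} satisfies: (i) its 𝒜-marginal equals Q_A; (ii) the total variation distance ‖Q_A × V_{B|A} − P^{(j)}_{AB}‖ ≤ |𝒜||ℬ|/ℓ; and (iii) V_{B|A}(b|a) = 0 implies P^{(j)}_{B|A}(b|a) = 0. -/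
/-!
Write `ℓ · Q a = m a`, so that `y a b = m a * V b a` has integral row sums `m`. The polytope of
real matrices with row sums `m` and entries between `⌊y⌋` and `⌈y⌉` has integral vertices: a
non-integral point `y` can be rounded, row by row, to an integral point `N` of the polytope, and
pushing `y` away from `N` until the largest deviation `|y - N|` reaches `1` makes one more entry
integral while staying in the polytope; `y` lies on the segment between `N` and the new point.
So `y` is a convex combination of integral points of the polytope, and Carathéodory's theorem
bounds their number by `|A||B| + 1 ≤ |A| 2^|B|`. Dividing by `ℓ` gives the joint types; they are
entrywise within `1/ℓ` of `Q × V` and vanish where `V` does, since integral entries of `y` are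
never rounded.
-/

open Finset

theorem Finset.exists_sum_eq_of_sum_le_of_le_sum {ι M : Type*} [AddCommGroup M] [LinearOrder M]
    [IsOrderedAddMonoid M] (s : Finset ι) {f g : ι → M} (hfg : ∀ i, f i ≤ g i) {r : M}
    (hr : r ∈ Set.Icc (∑ i ∈ s, f i) (∑ i ∈ s, g i)) :
    ∃ h : ι → M, (∀ i, h i ∈ Set.Icc (f i) (g i)) ∧ ∑ i ∈ s, h i = r := by
  classical
  induction s using Finset.induction_on generalizing r with
  | empty => exact ⟨f, fun i => ⟨le_rfl, hfg i⟩, by simpa using hr.1.antisymm hr.2⟩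
  | insert j s hj ih =>
    rw [sum_insert hj, sum_insert hj] at hr
    -- the smallest admissible value at `j` that leaves a reachable target for `s`
    set v := max (f j) (r - ∑ i ∈ s, g i)
    have hfs : ∑ i ∈ s, f i ≤ ∑ i ∈ s, g i := sum_le_sum fun i _ => hfg i
    obtain ⟨h, hbounds, hsum⟩ := ih (r := r - v)
      ⟨le_sub_comm.mp (max_le (le_sub_iff_add_le.mpr hr.1) (sub_le_sub_left hfs r)),
        sub_le_comm.mp (le_max_right _ _)⟩
    refine ⟨Function.update h j v, fun i => ?_, ?_⟩
    · rcases eq_or_ne i j with rfl | hij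
      · simpa using ⟨le_max_left _ _, max_le (hfg i) (sub_le_iff_le_add.mpr hr.2)⟩
      · simpa [hij] using hbounds i
    · rw [sum_insert hj, Function.update_self, sum_update_of_notMem hj, hsum, add_sub_cancel]

theorem exists_mem_Icc_floor_ceil_sum_eq {B : Type*} [Fintype B] (y : B → ℝ) {r : ℤ}
    (hr : ∑ b, y b = r) : ∃ N : B → ℤ, (∀ b, N b ∈ Set.Icc ⌊y b⌋ ⌈y b⌉) ∧ ∑ b, N b = r := by
  refine univ.exists_sum_eq_of_sum_le_of_le_sum (fun b => Int.floor_le_ceil (y b)) ⟨?_, ?_⟩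
  · suffices ∑ b, (⌊y b⌋ : ℝ) ≤ r by exact_mod_cast this
    exact hr ▸ sum_le_sum fun b _ => Int.floor_le (y b)
  · suffices (r : ℝ) ≤ ∑ b, (⌈y b⌉ : ℝ) by exact_mod_cast this
    exact hr ▸ sum_le_sum fun b _ => Int.le_ceil (y b)

theorem abs_sub_lt_one_of_mem_Icc_floor_ceil {x z : ℝ} (hz : z ∈ Set.Icc (⌊x⌋ : ℝ) ⌈x⌉) :
    |x - z| < 1 :=
  abs_sub_lt_iff.mpr
    ⟨by linarith [Int.sub_one_lt_floor x, hz.1], by linarith [Int.ceil_lt_add_one x, hz.2]⟩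

theorem eq_of_mem_Icc_floor_ceil {x z : ℝ} {n : ℤ} (hx : x = n)
    (hz : z ∈ Set.Icc (⌊x⌋ : ℝ) ⌈x⌉) : z = x := by
  rw [hx, Int.floor_intCast, Int.ceil_intCast, Set.Icc_self] at hz
  rw [hx, hz]

theorem mem_Icc_of_mem_Icc_floor_ceil {L U n : ℤ} {x : ℝ} (hx : x ∈ Set.Icc (L : ℝ) U)
    (hn : n ∈ Set.Icc ⌊x⌋ ⌈x⌉) : n ∈ Set.Icc L U :=
  ⟨(Int.le_floor.mpr hx.1).trans hn.1, hn.2.trans (Int.ceil_le.mpr hx.2)⟩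

theorem exists_int_add_div_abs_sub_eq {x : ℝ} {n : ℤ} (hx : x ≠ n) :
    ∃ k : ℤ, n + (x - n) / |x - n| = k := by
  have hx' : x - n ≠ 0 := sub_ne_zero.mpr hx
  rcases abs_choice (x - n) with h | h
  · exact ⟨n + 1, by rw [h, div_self hx']; push_cast; ring⟩
  · exact ⟨n - 1, by rw [h, div_neg, div_self hx']; push_cast; ring⟩

theorem add_div_mem_Icc_of_abs_sub_le {L U N : ℤ} {x s : ℝ} (hN : N ∈ Set.Icc L U)
    (hx : x ∈ Set.Icc (L : ℝ) U) (hs : 0 < s) (hxs : |x - N| ≤ s) :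
    N + (x - N) / s ∈ Set.Icc (L : ℝ) U := by
  have hd : |(x - N) / s| ≤ 1 := by
    rw [abs_div, abs_of_pos hs]; exact div_le_one_of_le₀ hxs hs.le
  have hLN : (L : ℝ) ≤ N := by exact_mod_cast hN.1
  have hNU : (N : ℝ) ≤ U := by exact_mod_cast hN.2
  rcases lt_trichotomy x N with hlt | rfl | hgt
  · have hL : ((L + 1 : ℤ) : ℝ) ≤ N :=
      Int.cast_le.mpr (Int.add_one_le_of_lt (by exact_mod_cast hx.1.trans_lt hlt))
    have : (x - N) / s ≤ 0 := div_nonpos_of_nonpos_of_nonneg (by linarith) hs.le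
    push_cast at hL
    constructor <;> linarith [(abs_le.mp hd).1]
  · simp [hLN, hNU]
  · have hU : ((N + 1 : ℤ) : ℝ) ≤ U :=
      Int.cast_le.mpr (Int.add_one_le_of_lt (by exact_mod_cast hgt.trans_le hx.2))
    have : 0 ≤ (x - N) / s := div_nonneg (by linarith) hs.le
    push_cast at hU
    constructor <;> linarith [(abs_le.mp hd).2]

theorem exists_fin_convexCombination_of_mem_convexHull {E : Type*} [AddCommGroup E]
    [Module ℝ E] [FiniteDimensional ℝ E] {s : Set E} {x : E} (hx : x ∈ convexHull ℝ s) :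
    ∃ K ≤ Module.finrank ℝ E + 1, ∃ (z : Fin K → E) (w : Fin K → ℝ),
      (∀ k, z k ∈ s) ∧ (∀ k, 0 < w k) ∧ ∑ k, w k = 1 ∧ ∑ k, w k • z k = x := by
  obtain ⟨ι, _, z, w, hzs, hind, hw0, hw1, hwz⟩ := eq_pos_convex_span_of_mem_convexHull hx
  let e := Fintype.equivFin ι
  refine ⟨Fintype.card ι, hind.card_le_finrank_succ.trans
      (Nat.add_le_add_right (Submodule.finrank_le _) 1), z ∘ e.symm, w ∘ e.symm,
    fun k => hzs ⟨_, rfl⟩, fun k => hw0 _, ?_, ?_⟩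
  · rw [← hw1]; exact e.symm.sum_comp w
  · rw [← hwz]; exact e.symm.sum_comp fun i => w i • z i

theorem Nat.mul_add_one_le_mul_two_pow {a b : ℕ} (ha : 1 ≤ a) : a * b + 1 ≤ a * 2 ^ b := by
  have := Nat.lt_two_pow_self (n := b)
  nlinarith

section RowSumPolytope

variable {A B : Type*} [Fintype B]

def rowSumPolytope (L U : A → B → ℤ) (r : A → ℤ) : Set (A → B → ℝ) :=
  {y | (∀ a b, y a b ∈ Set.Icc (L a b : ℝ) (U a b)) ∧ ∀ a, ∑ b, y a b = r a}

def integralMatrices : Set (A → B → ℝ) := {y | ∀ a b, ∃ n : ℤ, y a b = n}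

open Classical in
noncomputable def nonintegralEntries [Fintype A] (y : A → B → ℝ) : Finset (A × B) :=
  univ.filter fun p => ¬ ∃ n : ℤ, y p.1 p.2 = n

theorem exists_mem_segment_of_mem_Icc_floor_ceil [Fintype A] {L U : A → B → ℤ} {r : A → ℤ}
    {y : A → B → ℝ} (hy : y ∈ rowSumPolytope L U r) {N : A → B → ℤ}
    (hNy : ∀ a b, N a b ∈ Set.Icc ⌊y a b⌋ ⌈y a b⌉) (hNsum : ∀ a, ∑ b, N a b = r a)
    (hnot : y ∉ integralMatrices) :
    ∃ y' ∈ rowSumPolytope L U r,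
      nonintegralEntries y' ⊂ nonintegralEntries y ∧ y ∈ segment ℝ (fun a b => (N a b : ℝ)) y' := by
  obtain ⟨hbox, hrow⟩ := hy
  have hNy' : ∀ a b, (N a b : ℝ) ∈ Set.Icc (⌊y a b⌋ : ℝ) ⌈y a b⌉ :=
    fun a b => ⟨Int.cast_le.mpr (hNy a b).1, Int.cast_le.mpr (hNy a b).2⟩
  have hN_lt : ∀ a b, |y a b - N a b| < 1 :=
    fun a b => abs_sub_lt_one_of_mem_Icc_floor_ceil (hNy' a b)
  have hN_eq : ∀ a b, (∃ n : ℤ, y a b = n) → y a b = N a b :=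
    fun a b ⟨_, hn⟩ => (eq_of_mem_Icc_floor_ceil hn (hNy' a b)).symm
  obtain ⟨a₀, b₀, h₀⟩ : ∃ a b, ¬ ∃ n : ℤ, y a b = n := by simpa [integralMatrices] using hnot
  obtain ⟨p, -, hp⟩ :=
    exists_max_image univ (fun p : A × B => |y p.1 p.2 - N p.1 p.2|) ⟨(a₀, b₀), mem_univ _⟩
  have hp_ne : y p.1 p.2 ≠ N p.1 p.2 := fun h => by
    have := hp (a₀, b₀) (mem_univ _)
    rw [h, sub_self, abs_zero] at this
    exact h₀ ⟨N a₀ b₀, sub_eq_zero.mp (abs_nonpos_iff.mp this)⟩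
  set s := |y p.1 p.2 - N p.1 p.2|
  have hs : 0 < s := abs_pos.mpr (sub_ne_zero.mpr hp_ne)
  -- stretching the deviation from `N` by `1 / s` makes the entry at `p` hit `N ± 1`
  set y' : A → B → ℝ := fun a b => N a b + (y a b - N a b) / s
  refine ⟨y', ⟨fun a b => ?_, fun a => ?_⟩, (ssubset_iff_of_subset fun q hq => ?_).mpr
    ⟨p, ?_, ?_⟩, ⟨1 - s, s, by linarith [hN_lt p.1 p.2], hs.le, by ring, ?_⟩⟩
  · exact add_div_mem_Icc_of_abs_sub_le (mem_Icc_of_mem_Icc_floor_ceil (hbox a b) (hNy a b))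
      (hbox a b) hs (hp (a, b) (mem_univ _))
  · have hNsum' : ∑ b, (N a b : ℝ) = r a := by exact_mod_cast hNsum a
    simp only [y', sum_add_distrib, ← sum_div, sum_sub_distrib, hrow a, hNsum', sub_self,
      zero_div, add_zero]
  · simp only [nonintegralEntries, mem_filter, mem_univ, true_and] at hq ⊢
    exact fun h => hq ⟨N q.1 q.2, by simp [y', ← hN_eq q.1 q.2 h]⟩
  · simpa [nonintegralEntries] using fun n hn => hp_ne (hN_eq p.1 p.2 ⟨n, hn⟩)
  · simpa [nonintegralEntries] using exists_int_add_div_abs_sub_eq hp_ne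
  · ext a b
    simp only [y', Pi.add_apply, Pi.smul_apply, smul_eq_mul]
    field_simp
    ring

theorem rowSumPolytope_subset_convexHull [Fintype A] (L U : A → B → ℤ) (r : A → ℤ) :
    rowSumPolytope L U r ⊆ convexHull ℝ (rowSumPolytope L U r ∩ integralMatrices) := by
  intro y hy
  induction hn : (nonintegralEntries y).card using Nat.strong_induction_on generalizing y with
  | _ n ih =>
  by_cases hint : y ∈ integralMatrices
  · exact subset_convexHull ℝ _ ⟨hy, hint⟩
  choose N hNy hNsum using fun a => exists_mem_Icc_floor_ceil_sum_eq (y a) (hy.2 a)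
  have hN : (fun a b => (N a b : ℝ)) ∈ rowSumPolytope L U r ∩ integralMatrices :=
    ⟨⟨fun a b => by
        obtain ⟨hL, hU⟩ := mem_Icc_of_mem_Icc_floor_ceil (hy.1 a b) (hNy a b)
        exact ⟨Int.cast_le.mpr hL, Int.cast_le.mpr hU⟩,
      fun a => by beta_reduce; exact_mod_cast hNsum a⟩, fun a b => ⟨N a b, rfl⟩⟩
  obtain ⟨y', hy', hlt, hseg⟩ := exists_mem_segment_of_mem_Icc_floor_ceil hy hNy hNsum hint
  exact (convex_convexHull ℝ _).segment_subset (subset_convexHull ℝ _ hN)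
    (ih _ (hn ▸ card_lt_card hlt) hy' rfl) hseg

def rowSumRoundings (y : A → B → ℝ) (r : A → ℤ) : Set (A → B → ℝ) :=
  rowSumPolytope (fun a b => ⌊y a b⌋) (fun a b => ⌈y a b⌉) r ∩ integralMatrices

variable {y z : A → B → ℝ} {r : A → ℤ}

theorem mem_convexHull_rowSumRoundings [Fintype A] (hy : ∀ a, ∑ b, y a b = r a) :
    y ∈ convexHull ℝ (rowSumRoundings y r) :=
  rowSumPolytope_subset_convexHull _ _ _ ⟨fun _ _ => ⟨Int.floor_le _, Int.le_ceil _⟩, hy⟩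

theorem sum_eq_of_mem_rowSumRoundings (hz : z ∈ rowSumRoundings y r) (a : A) :
    ∑ b, z a b = r a :=
  hz.1.2 a

theorem sum_abs_sub_le_of_mem_rowSumRoundings [Fintype A] (hz : z ∈ rowSumRoundings y r) :
    ∑ a, ∑ b, |y a b - z a b| ≤ Fintype.card A * Fintype.card B := by
  calc ∑ a, ∑ b, |y a b - z a b| ≤ ∑ _a : A, ∑ _b : B, (1 : ℝ) := by
        gcongr with a _ b _
        exact (abs_sub_lt_one_of_mem_Icc_floor_ceil (hz.1.1 a b)).le
    _ = Fintype.card A * Fintype.card B := by simp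

theorem eq_of_mem_rowSumRoundings {a : A} {b : B} {n : ℤ} (hz : z ∈ rowSumRoundings y r)
    (hy : y a b = n) : z a b = y a b :=
  eq_of_mem_Icc_floor_ceil hy (hz.1.1 a b)

theorem exists_nat_eq_of_mem_rowSumRoundings {a : A} {b : B} (hz : z ∈ rowSumRoundings y r)
    (hy : 0 ≤ y a b) : ∃ n : ℕ, z a b = n := by
  obtain ⟨n, hn⟩ := hz.2 a b
  have : (⌊y a b⌋ : ℝ) ≤ n := hn ▸ (hz.1.1 a b).1
  lift n to ℕ using (Int.floor_nonneg.mpr hy).trans (by exact_mod_cast this)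
  exact ⟨n, by exact_mod_cast hn⟩

end RowSumPolytope

theorem stmt_10_general {A B : Type} [Fintype A] [Fintype B]
    (ℓ : ℕ)
    (Q : A → ℝ) (hQ1 : ∑ a, Q a = 1)
    (hQtype : ∀ a, ∃ m : ℕ, Q a = (m : ℝ) / ℓ)
    (V : B → A → ℝ) (hV0 : ∀ b a, 0 ≤ V b a) (hV1 : ∀ a, ∑ b, V b a = 1) :
    ∃ K : ℕ, K ≤ Fintype.card A * 2 ^ (Fintype.card B) ∧
      ∃ (P : Fin K → A → B → ℝ) (β : Fin K → ℝ),
        (∀ k, 0 ≤ β k) ∧ (∑ k, β k = 1) ∧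
        (∀ a b, Q a * V b a = ∑ k, β k * P k a b) ∧
        ∀ k, (∀ a b, 0 ≤ P k a b) ∧ (∑ a, ∑ b, P k a b = 1) ∧
          (∀ a b, ∃ m : ℕ, P k a b = (m : ℝ) / ℓ) ∧
          (∀ a, ∑ b, P k a b = Q a) ∧
          (∑ a, ∑ b, |Q a * V b a - P k a b|
            ≤ (Fintype.card A * Fintype.card B : ℝ) / ℓ) ∧
          (∀ a b, V b a = 0 → P k a b = 0) := by
  choose m hm using hQtype
  set y : A → B → ℝ := fun a b => m a * V b a
  have hQV : ∀ a b, Q a * V b a = y a b / ℓ := fun a b => by rw [hm]; ring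
  have hrow : ∀ a, ∑ b, y a b = (m a : ℤ) := fun a => by simp [y, ← mul_sum, hV1]
  obtain ⟨K, hK, z, w, hz, hw0, hw1, hwz⟩ :=
    exists_fin_convexCombination_of_mem_convexHull (mem_convexHull_rowSumRoundings hrow)
  have hnat : ∀ k a b, ∃ n : ℕ, z k a b = n := fun k a b =>
    exists_nat_eq_of_mem_rowSumRoundings (hz k) (mul_nonneg (Nat.cast_nonneg _) (hV0 b a))
  have hmarg : ∀ k a, ∑ b, z k a b / ℓ = Q a := fun k a => by
    rw [← sum_div, sum_eq_of_mem_rowSumRoundings (hz k), hm]; rfl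
  obtain ⟨a₀, -, -⟩ := exists_ne_zero_of_sum_ne_zero (hQ1.trans_ne one_ne_zero)
  refine ⟨K, hK.trans ?_, fun k a b => z k a b / ℓ, w, fun k => (hw0 k).le, hw1, fun a b => ?_,
    fun k => ⟨fun a b => ?_, by simp only [hmarg, hQ1], fun a b => ?_, hmarg k, ?_,
      fun a b hV => ?_⟩⟩
  · simpa [Module.finrank_pi_fintype] using
      Nat.mul_add_one_le_mul_two_pow (Fintype.card_pos_iff.mpr ⟨a₀⟩)
  · simp only [hQV, ← hwz, Finset.sum_apply, Pi.smul_apply, smul_eq_mul, sum_div, mul_div_assoc]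
  · obtain ⟨n, hn⟩ := hnat k a b
    simp only [hn]; positivity
  · exact (hnat k a b).imp fun n hn => by simp only [hn]
  · simp only [hQV, ← sub_div, abs_div, Nat.abs_cast, ← sum_div]
    exact div_le_div_of_nonneg_right (sum_abs_sub_le_of_mem_rowSumRoundings (hz k)) ℓ.cast_nonneg
  · have hy : y a b = ((0 : ℤ) : ℝ) := by simp [y, hV]
    simp [eq_of_mem_rowSumRoundings (hz k) hy, y, hV]

/-- Decomposition of a joint distribution Q_A × V_{B|A} (with Q_A a type of order ℓ)
into a convex combination of at most |A|·2^{|B|} joint types of order ℓ, each with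
A-marginal Q_A, each within total variation |A||B|/ℓ of Q_A × V_{B|A}, and each
inheriting the zeros of V_{B|A}. -/
theorem stmt_10 {A B : Type} [Fintype A] [Fintype B]
    (ℓ : ℕ) (hℓ : 1 ≤ ℓ)
    (Q : A → ℝ) (hQ0 : ∀ a, 0 ≤ Q a) (hQ1 : ∑ a, Q a = 1)
    (hQtype : ∀ a, ∃ m : ℕ, Q a = (m : ℝ) / ℓ)
    (V : B → A → ℝ) (hV0 : ∀ b a, 0 ≤ V b a) (hV1 : ∀ a, ∑ b, V b a = 1) :
    ∃ K : ℕ, K ≤ Fintype.card A * 2 ^ (Fintype.card B) ∧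
      ∃ (P : Fin K → A → B → ℝ) (β : Fin K → ℝ),
        (∀ k, 0 ≤ β k) ∧ (∑ k, β k = 1) ∧
        (∀ a b, Q a * V b a = ∑ k, β k * P k a b) ∧
        ∀ k, (∀ a b, 0 ≤ P k a b) ∧ (∑ a, ∑ b, P k a b = 1) ∧
          (∀ a b, ∃ m : ℕ, P k a b = (m : ℝ) / ℓ) ∧
          (∀ a, ∑ b, P k a b = Q a) ∧
          (∑ a, ∑ b, |Q a * V b a - P k a b|
            ≤ (Fintype.card A * Fintype.card B : ℝ) / ℓ) ∧
          (∀ a b, V b a = 0 → P k a b = 0) :=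
  stmt_10_general ℓ Q hQ1 hQtype V hV0 hV1
end

section
/- (Binary-input symmetric optimization) Let 𝒳 = {0,1}, 𝒴, 𝒵 finite, q: 𝒳 × 𝒴 → ℝ, and P_{XZ}, P_{Y|XZ} given. For z ∈ 𝒵 define d_q(z) = Σ_y [P_{Y|XZ}(y|0,z) − P_{Y|XZ}(y|1,z)]·[q(1,y) − q(0,y)]. Then the minimum of E_{V_{X̃ZX} × P_{Y|XZ}}[q(X̃,Y) − q(X,Y)] over all symmetric V_{X̃ZX} (V(x̃,z,x) = V(x,z,x̃)) with V_{XZ} = P_{XZ} and satisfying V_{X̃X|Z}(x,x|z) ≥ P_{X|Z}(x|z)² for all (x,z), equals Σ_{z: d_q(z) < 0} P_Z(z)·P_{X|Z}(0|z)·P_{X|Z}(1|z)·d_q(z). In particular, this minimum is nonnegative if and only if for every z, P_Z(z)·P_{X|Z}(0|z)·P_{X|Z}(1|z)·d_q(z) ≥ 0. -/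
open Finset
open scoped Classical

/-!
For a symmetric coupling `V` the terms with `x̃ = x` vanish, so the objective only sees the
off-diagonal mass `a(z) = V(0,z,1) = V(1,z,0)` and equals `∑_z a(z) d(z)`. Given the marginal
`P_{XZ}`, the diagonal constraint at `x = 0` reads `a(z) ≤ P(0,z) P(1,z) / P_Z(z)`, and conversely
every `a` between `0` and that bound is the off-diagonal part of a feasible coupling. The linear
program therefore splits over `z`: the minimum takes `a(z)` at the upper bound when `d(z) < 0`
and `a(z) = 0` otherwise.
-/

lemma mul_div_mul_div_self {K : Type*} [Field K] (P a b : K) :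
    P * (a / P) * (b / P) = a * b / P := by
  rcases eq_or_ne P 0 with rfl | hP
  · simp
  · field_simp

section OrderedField

variable {K : Type*} [Field K] [LinearOrder K] [IsStrictOrderedRing K]

lemma mul_div_add_le_left {p p' : K} (hp : 0 ≤ p) (hp' : 0 ≤ p') : p * p' / (p + p') ≤ p :=
  div_le_of_le_mul₀ (add_nonneg hp hp') hp (by nlinarith)

lemma sq_div_le_sub_div_iff {p p' a P : K} (hP : P = p + p') (hPpos : 0 < P) :
    (p / P) ^ 2 ≤ (p - a) / P ↔ a ≤ p * p' / P := by
  rw [div_pow, div_le_div_iff₀ (by positivity) hPpos, le_div_iff₀ hPpos]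
  subst hP
  constructor <;> intro h <;> nlinarith

lemma ite_neg_mul_le_mul {a m d : K} (ha : 0 ≤ a) (ham : a ≤ m) :
    (if d < 0 then m * d else 0) ≤ a * d := by
  split_ifs with hd
  · exact mul_le_mul_of_nonpos_right ham hd.le
  · exact mul_nonneg ha (not_lt.1 hd)

end OrderedField

lemma Finset.sum_filter_neg_nonneg_iff {ι R : Type*} [Fintype ι] [CommRing R] [LinearOrder R]
    [IsStrictOrderedRing R] {c d : ι → R} (hc : ∀ i, 0 ≤ c i) :
    0 ≤ ∑ i ∈ univ.filter (fun i => d i < 0), c i * d i ↔ ∀ i, 0 ≤ c i * d i := by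
  have hneg : ∀ i ∈ univ.filter (fun i => d i < 0), c i * d i ≤ 0 := fun i hi =>
    mul_nonpos_of_nonneg_of_nonpos (hc i) (mem_filter.1 hi).2.le
  refine ⟨fun h i => ?_, fun h => sum_nonneg fun i _ => h i⟩
  by_cases hdi : d i < 0
  · exact ((sum_eq_zero_iff_of_nonpos hneg).1 (le_antisymm (sum_nonpos hneg) h) i
      (by simpa using hdi)).ge
  · exact mul_nonneg (hc i) (not_lt.1 hdi)

lemma sum_fin_two_mul_of_symm {R : Type*} [CommRing R] {v c : Fin 2 → Fin 2 → R}
    (hv : ∀ i j, v i j = v j i) (hc : ∀ i, c i i = 0) :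
    ∑ i, ∑ j, v i j * c i j = v 0 1 * (c 0 1 + c 1 0) := by
  simp only [Fin.sum_univ_two, hc, hv 1 0]
  ring

section Coupling

variable {Z : Type*}

lemma sum_coupling_mul_gain_of_symm {Y : Type*} [Fintype Y] [Fintype Z] (q : Fin 2 → Y → ℝ)
    (PY : Y → Fin 2 → Z → ℝ)
    {V : Fin 2 → Z → Fin 2 → ℝ} (hV : ∀ xt z x, V xt z x = V x z xt) :
    ∑ xt, ∑ z, ∑ x, ∑ y, V xt z x * PY y x z * (q xt y - q x y) =
      ∑ z, V 0 z 1 * ∑ y, (PY y 0 z - PY y 1 z) * (q 1 y - q 0 y) := by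
  rw [sum_comm]
  refine sum_congr rfl fun z _ => ?_
  simp only [mul_assoc, ← mul_sum]
  rw [sum_fin_two_mul_of_symm (fun i j => hV i z j) (by simp), ← sum_add_distrib]
  congr 1
  exact sum_congr rfl fun y _ => by ring

def symmCouplings (PXZ : Fin 2 → Z → ℝ) (PZ : Z → ℝ) : Set (Fin 2 → Z → Fin 2 → ℝ) :=
  {V | (∀ xt z x, 0 ≤ V xt z x) ∧
    (∀ xt z x, V xt z x = V x z xt) ∧
    (∀ x z, ∑ xt, V xt z x = PXZ x z) ∧
    (∀ x z, (PXZ x z / PZ z) ^ 2 ≤ V x z x / PZ z)}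

def binaryCoupling (PXZ : Fin 2 → Z → ℝ) (a : Z → ℝ) : Fin 2 → Z → Fin 2 → ℝ :=
  fun xt z x => if xt = x then PXZ x z - a z else a z

variable {PXZ : Fin 2 → Z → ℝ} {PZ : Z → ℝ}

lemma off_diag_le_of_mem_symmCouplings (hPXZ0 : ∀ x z, 0 ≤ PXZ x z)
    (hPZ : ∀ z, PZ z = PXZ 0 z + PXZ 1 z) {V : Fin 2 → Z → Fin 2 → ℝ}
    (hV : V ∈ symmCouplings PXZ PZ) (z : Z) :
    V 0 z 1 ≤ PXZ 0 z * PXZ 1 z / PZ z := by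
  obtain ⟨hV0, hVsymm, hVmarg, hVdiag⟩ := hV
  have hmarg0 := hVmarg 0 z
  have hmarg1 := hVmarg 1 z
  simp only [Fin.sum_univ_two, hVsymm 1 z 0] at hmarg0 hmarg1
  rcases (show 0 ≤ PZ z by linarith [hPZ z, hPXZ0 0 z, hPXZ0 1 z]).eq_or_lt with hP | hP
  · rw [← hP, div_zero]
    linarith [hPZ z, hPXZ0 0 z, hPXZ0 1 z, hV0 1 z 1]
  · have hdiag := hVdiag 0 z
    rwa [show V 0 z 0 = PXZ 0 z - V 0 z 1 by linarith, sq_div_le_sub_div_iff (hPZ z) hP] at hdiag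

lemma binaryCoupling_mem_symmCouplings (hPXZ0 : ∀ x z, 0 ≤ PXZ x z)
    (hPZ : ∀ z, PZ z = PXZ 0 z + PXZ 1 z) {a : Z → ℝ} (ha0 : ∀ z, 0 ≤ a z)
    (ham : ∀ z, a z ≤ PXZ 0 z * PXZ 1 z / PZ z) :
    binaryCoupling PXZ a ∈ symmCouplings PXZ PZ := by
  have hle : ∀ x z, a z ≤ PXZ x z := by
    intro x z
    refine (ham z).trans ?_
    rw [hPZ z]
    fin_cases x
    · exact mul_div_add_le_left (hPXZ0 0 z) (hPXZ0 1 z)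
    · simpa [mul_comm, add_comm] using mul_div_add_le_left (hPXZ0 1 z) (hPXZ0 0 z)
  refine ⟨fun xt z x => ?_, fun xt z x => ?_, fun x z => ?_, fun x z => ?_⟩
  · unfold binaryCoupling
    split_ifs
    · linarith [hle x z]
    · exact ha0 z
  · unfold binaryCoupling
    split_ifs <;> simp_all
  · fin_cases x <;> simp [binaryCoupling, Fin.sum_univ_two]
  · simp only [binaryCoupling, if_pos]
    rcases (show 0 ≤ PZ z by linarith [hPZ z, hPXZ0 0 z, hPXZ0 1 z]).eq_or_lt with hP | hP
    · simp [← hP]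
    · fin_cases x
      · exact (sq_div_le_sub_div_iff (hPZ z) hP).2 (ham z)
      · exact (sq_div_le_sub_div_iff ((hPZ z).trans (add_comm _ _)) hP).2
          (by simpa [mul_comm] using ham z)

end Coupling

theorem stmt_12_general {Y Z : Type} [Fintype Y] [Fintype Z]
    (q : Fin 2 → Y → ℝ)
    (PXZ : Fin 2 → Z → ℝ) (hPXZ0 : ∀ x z, 0 ≤ PXZ x z)
    (PY : Y → Fin 2 → Z → ℝ)
    (PZ : Z → ℝ) (hPZ : ∀ z, PZ z = ∑ x, PXZ x z)
    (d : Z → ℝ) (hd : ∀ z, d z = ∑ y, (PY y 0 z - PY y 1 z) * (q 1 y - q 0 y))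
    (obj : (Fin 2 → Z → Fin 2 → ℝ) → ℝ)
    (hobj : ∀ V, obj V = ∑ xt, ∑ z, ∑ x, ∑ y, V xt z x * PY y x z * (q xt y - q x y))
    (feas : Set (Fin 2 → Z → Fin 2 → ℝ))
    (hfeas : feas = {V | (∀ xt z x, 0 ≤ V xt z x) ∧
      (∀ xt z x, V xt z x = V x z xt) ∧
      (∀ x z, ∑ xt, V xt z x = PXZ x z) ∧
      (∀ x z, (PXZ x z / PZ z) ^ 2 ≤ V x z x / PZ z)})
    (S : ℝ)
    (hS : S = ∑ z ∈ Finset.univ.filter (fun z => d z < 0),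
      PZ z * (PXZ 0 z / PZ z) * (PXZ 1 z / PZ z) * d z) :
    IsLeast (obj '' feas) S ∧
      (0 ≤ S ↔ ∀ z, 0 ≤ PZ z * (PXZ 0 z / PZ z) * (PXZ 1 z / PZ z) * d z) := by
  obtain rfl : feas = symmCouplings PXZ PZ := hfeas
  replace hPZ : ∀ z, PZ z = PXZ 0 z + PXZ 1 z := by simpa [Fin.sum_univ_two] using hPZ
  have hPZ0 z : 0 ≤ PZ z := by linarith [hPZ z, hPXZ0 0 z, hPXZ0 1 z]
  have hm0 z : 0 ≤ PXZ 0 z * PXZ 1 z / PZ z :=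
    div_nonneg (mul_nonneg (hPXZ0 0 z) (hPXZ0 1 z)) (hPZ0 z)
  have hobjV : ∀ V ∈ symmCouplings PXZ PZ, obj V = ∑ z, V 0 z 1 * d z := fun V hV => by
    simp only [hobj, hd, sum_coupling_mul_gain_of_symm q PY hV.2.1]
  have hSm : S = ∑ z, if d z < 0 then PXZ 0 z * PXZ 1 z / PZ z * d z else 0 := by
    simp only [hS, sum_filter, mul_div_mul_div_self]
  refine ⟨⟨?_, ?_⟩, hS ▸ sum_filter_neg_nonneg_iff fun z => by
    rw [mul_div_mul_div_self]; exact hm0 z⟩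
  · let a z : ℝ := if d z < 0 then PXZ 0 z * PXZ 1 z / PZ z else 0
    have hW : binaryCoupling PXZ a ∈ symmCouplings PXZ PZ :=
      binaryCoupling_mem_symmCouplings hPXZ0 hPZ (fun z => by unfold a; split_ifs <;> simp [hm0 z])
        (fun z => by unfold a; split_ifs <;> simp [hm0 z])
    refine ⟨_, hW, ?_⟩
    rw [hobjV _ hW, hSm]
    refine sum_congr rfl fun z _ => ?_
    simp only [binaryCoupling, Fin.zero_ne_one, if_false, a]
    split_ifs <;> simp
  · rintro _ ⟨V, hV, rfl⟩
    rw [hobjV V hV, hSm]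
    exact sum_le_sum fun z _ => ite_neg_mul_le_mul (hV.1 0 z 1)
      (off_diag_le_of_mem_symmCouplings hPXZ0 hPZ hV z)

/-- Binary-input symmetric optimization: the minimum of
E[q(X̃,Y) − q(X,Y)] over symmetric couplings V_{X̃ZX} with (X,Z)-marginal P_{XZ}
and diagonal constraint V_{X̃X|Z}(x,x|z) ≥ P_{X|Z}(x|z)² equals
Σ_{z : d_q(z)<0} P_Z(z)·P_{X|Z}(0|z)·P_{X|Z}(1|z)·d_q(z); in particular it is
nonnegative iff P_Z(z)·P_{X|Z}(0|z)·P_{X|Z}(1|z)·d_q(z) ≥ 0 for all z. -/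
theorem stmt_12 {Y Z : Type} [Fintype Y] [Fintype Z]
    (q : Fin 2 → Y → ℝ)
    (PXZ : Fin 2 → Z → ℝ) (hPXZ0 : ∀ x z, 0 ≤ PXZ x z)
    (hPXZ1 : ∑ x, ∑ z, PXZ x z = 1)
    (PY : Y → Fin 2 → Z → ℝ) (hPY0 : ∀ y x z, 0 ≤ PY y x z)
    (hPY1 : ∀ x z, ∑ y, PY y x z = 1)
    (PZ : Z → ℝ) (hPZ : ∀ z, PZ z = ∑ x, PXZ x z)
    (d : Z → ℝ) (hd : ∀ z, d z = ∑ y, (PY y 0 z - PY y 1 z) * (q 1 y - q 0 y))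
    (obj : (Fin 2 → Z → Fin 2 → ℝ) → ℝ)
    (hobj : ∀ V, obj V = ∑ xt, ∑ z, ∑ x, ∑ y, V xt z x * PY y x z * (q xt y - q x y))
    (feas : Set (Fin 2 → Z → Fin 2 → ℝ))
    (hfeas : feas = {V | (∀ xt z x, 0 ≤ V xt z x) ∧
      (∀ xt z x, V xt z x = V x z xt) ∧
      (∀ x z, ∑ xt, V xt z x = PXZ x z) ∧
      (∀ x z, (PXZ x z / PZ z) ^ 2 ≤ V x z x / PZ z)})
    (S : ℝ)
    (hS : S = ∑ z ∈ Finset.univ.filter (fun z => d z < 0),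
      PZ z * (PXZ 0 z / PZ z) * (PXZ 1 z / PZ z) * d z) :
    IsLeast (obj '' feas) S ∧
      (0 ≤ S ↔ ∀ z, 0 ≤ PZ z * (PXZ 0 z / PZ z) * (PXZ 1 z / PZ z) * d z) :=
  stmt_12_general q PXZ hPXZ0 PY PZ hPZ d hd obj hobj feas hfeas S hS
end

section
/- (Binary-input: the diagonal constraint is inactive for the sign of the minimum) In the setting of the previous statement, removing the constraint V_{X̃X|Z}(x,x|z) ≥ P_{X|Z}(x|z)² changes the optimal value of the minimization to Σ_{z: d_q(z) < 0} min{P_{XZ}(0,z), P_{XZ}(1,z)}·d_q(z), but the nonnegativity condition is unchanged: the unconstrained minimum is ≥ 0 if and only if the constrained minimum is ≥ 0, both being equivalent to: for all z, P_Z(z)·P_{X|Z}(0|z)·P_{X|Z}(1|z)·d_q(z) ≥ 0. -/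
/-!
For a symmetric `V` the terms with `x̃ = x` vanish, so the objective is `∑ z, a z * d z` with
`a z = V(0,1|z)`, and the marginal constraints say exactly `0 ≤ a z ≤ min (P(0,z)) (P(1,z))`.
A linear form over this box is minimised by taking `a z` maximal where `d z < 0` and zero
elsewhere, which gives `S'`. Both `S'` and `S` are sums over `{d < 0}` of a nonnegative weight
times `d z`, so each is `≥ 0` iff its weight vanishes wherever `d z < 0`; and the two weights
`min (P(0,z)) (P(1,z))` and `P_Z(z) P(0|z) P(1|z)` vanish exactly when `P(0,z) P(1,z) = 0`.
-/

open Finset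
open scoped Classical

lemma mul_nonneg_iff_neg_imp_eq_zero {c d : ℝ} (hc : 0 ≤ c) : 0 ≤ c * d ↔ (d < 0 → c = 0) := by
  constructor
  · intro h hd
    by_contra hc0
    exact (mul_neg_of_pos_of_neg (lt_of_le_of_ne hc (Ne.symm hc0)) hd).not_ge h
  · intro h
    by_cases hd : d < 0
    · simp [h hd]
    · exact mul_nonneg hc (not_lt.mp hd)

section NegativePart

variable {ι : Type*} [Fintype ι] {c d : ι → ℝ}

lemma sum_filter_neg_mul_nonneg_iff (hc : ∀ i, 0 ≤ c i) :
    0 ≤ ∑ i ∈ univ.filter (fun i => d i < 0), c i * d i ↔ ∀ i, d i < 0 → c i = 0 := by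
  have hterms : ∀ i ∈ univ.filter (fun i => d i < 0), c i * d i ≤ 0 := fun i hi =>
    mul_nonpos_of_nonneg_of_nonpos (hc i) (mem_filter.mp hi).2.le
  rw [(sum_nonpos hterms).ge_iff_eq, sum_eq_zero_iff_of_nonpos hterms]
  refine forall_congr' fun i => ?_
  simp only [mem_filter, mem_univ, true_and, mul_eq_zero]
  exact imp_congr_right fun hd => or_iff_left hd.ne

lemma sum_filter_neg_mul_le_sum_mul {a m : ι → ℝ} (ha : ∀ i, 0 ≤ a i) (ham : ∀ i, a i ≤ m i) :
    ∑ i ∈ univ.filter (fun i => d i < 0), m i * d i ≤ ∑ i, a i * d i := by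
  rw [sum_filter]
  refine sum_le_sum fun i _ => ?_
  split_ifs with hd
  · exact mul_le_mul_of_nonpos_right (ham i) hd.le
  · exact mul_nonneg (ha i) (not_lt.mp hd)

end NegativePart

lemma min_eq_zero_iff_mul_eq_zero {p q : ℝ} (hp : 0 ≤ p) (hq : 0 ≤ q) :
    min p q = 0 ↔ p * q = 0 := by
  rcases le_total p q with h | h
  · rw [min_eq_left h, mul_eq_zero, or_iff_left_of_imp]
    rintro rfl; exact le_antisymm h hp
  · rw [min_eq_right h, mul_eq_zero, or_iff_right_of_imp]
    rintro rfl; exact le_antisymm h hq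

lemma add_mul_div_add_mul_div_add_eq_zero_iff {p q : ℝ} (hp : 0 ≤ p) (hq : 0 ≤ q) :
    (p + q) * (p / (p + q)) * (q / (p + q)) = 0 ↔ p * q = 0 := by
  rcases eq_or_ne (p + q) 0 with h | h
  · have hp0 : p = 0 := by linarith
    simp [hp0]
  · rw [show (p + q) * (p / (p + q)) * (q / (p + q)) = p * q / (p + q) by field_simp,
      div_eq_zero_iff, or_iff_left h]

section BinaryCoupling

variable {Y Z : Type*}

/-- The feasible set of the minimisation without the diagonal constraint. -/
def symmetricCouplings (PXZ : Fin 2 → Z → ℝ) : Set (Fin 2 → Z → Fin 2 → ℝ) :=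
  {V | (∀ xt z x, 0 ≤ V xt z x) ∧ (∀ xt z x, V xt z x = V x z xt) ∧
    (∀ x z, ∑ xt, V xt z x = PXZ x z)}

def offDiagCoupling (PXZ : Fin 2 → Z → ℝ) (a : Z → ℝ) : Fin 2 → Z → Fin 2 → ℝ :=
  fun xt z x => if xt = x then PXZ x z - a z else a z

variable {PXZ : Fin 2 → Z → ℝ}

lemma offDiagCoupling_mem_symmetricCouplings {a : Z → ℝ} (ha : ∀ z, 0 ≤ a z)
    (ham : ∀ z, a z ≤ min (PXZ 0 z) (PXZ 1 z)) :
    offDiagCoupling PXZ a ∈ symmetricCouplings PXZ := by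
  refine ⟨fun xt z x => ?_, fun xt z x => ?_, fun x z => ?_⟩
  · have : a z ≤ PXZ x z := by
      fin_cases x
      exacts [(ham z).trans (min_le_left _ _), (ham z).trans (min_le_right _ _)]
    unfold offDiagCoupling
    split_ifs <;> linarith [ha z]
  · rcases eq_or_ne xt x with rfl | h
    · rfl
    · simp [offDiagCoupling, h, h.symm]
  · fin_cases x <;> simp [offDiagCoupling, Fin.sum_univ_two]

lemma off_diag_mem_Icc_of_mem_symmetricCouplings {V : Fin 2 → Z → Fin 2 → ℝ}
    (hV : V ∈ symmetricCouplings PXZ) (z : Z) :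
    V 0 z 1 ∈ Set.Icc 0 (min (PXZ 0 z) (PXZ 1 z)) := by
  obtain ⟨hnonneg, hsymm, hmarg⟩ := hV
  have h0 := hmarg 0 z
  have h1 := hmarg 1 z
  rw [Fin.sum_univ_two, hsymm 1 z 0] at h0
  rw [Fin.sum_univ_two] at h1
  exact ⟨hnonneg 0 z 1, le_min (by linarith [hnonneg 0 z 0]) (by linarith [hnonneg 1 z 1])⟩

lemma objective_eq_sum_off_diag_mul [Fintype Y] [Fintype Z] {V : Fin 2 → Z → Fin 2 → ℝ}
    (hsymm : ∀ xt z x, V xt z x = V x z xt) (PY : Y → Fin 2 → Z → ℝ) (q : Fin 2 → Y → ℝ) :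
    ∑ xt, ∑ z, ∑ x, ∑ y, V xt z x * PY y x z * (q xt y - q x y) =
      ∑ z, V 0 z 1 * ∑ y, (PY y 0 z - PY y 1 z) * (q 1 y - q 0 y) := by
  rw [sum_comm]
  refine sum_congr rfl fun z _ => ?_
  simp only [Fin.sum_univ_two, hsymm 1 z 0, mul_sum, ← sum_add_distrib]
  exact sum_congr rfl fun y _ => by ring

end BinaryCoupling

theorem stmt_13_general {Y Z : Type} [Fintype Y] [Fintype Z]
    (q : Fin 2 → Y → ℝ)
    (PXZ : Fin 2 → Z → ℝ) (hPXZ0 : ∀ x z, 0 ≤ PXZ x z)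
    (PY : Y → Fin 2 → Z → ℝ)
    (PZ : Z → ℝ) (hPZ : ∀ z, PZ z = ∑ x, PXZ x z)
    (d : Z → ℝ) (hd : ∀ z, d z = ∑ y, (PY y 0 z - PY y 1 z) * (q 1 y - q 0 y))
    (obj : (Fin 2 → Z → Fin 2 → ℝ) → ℝ)
    (hobj : ∀ V, obj V = ∑ xt, ∑ z, ∑ x, ∑ y, V xt z x * PY y x z * (q xt y - q x y))
    (feasU : Set (Fin 2 → Z → Fin 2 → ℝ))
    (hfeasU : feasU = {V | (∀ xt z x, 0 ≤ V xt z x) ∧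
      (∀ xt z x, V xt z x = V x z xt) ∧
      (∀ x z, ∑ xt, V xt z x = PXZ x z)})
    (S : ℝ)
    (hS : S = ∑ z ∈ Finset.univ.filter (fun z => d z < 0),
      PZ z * (PXZ 0 z / PZ z) * (PXZ 1 z / PZ z) * d z)
    (S' : ℝ)
    (hS' : S' = ∑ z ∈ Finset.univ.filter (fun z => d z < 0),
      min (PXZ 0 z) (PXZ 1 z) * d z) :
    IsLeast (obj '' feasU) S' ∧
      (0 ≤ S' ↔ 0 ≤ S) ∧
      (0 ≤ S' ↔ ∀ z, 0 ≤ PZ z * (PXZ 0 z / PZ z) * (PXZ 1 z / PZ z) * d z) := by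
  change feasU = symmetricCouplings PXZ at hfeasU
  subst hfeasU hS hS'
  have hobj_eq : ∀ V ∈ symmetricCouplings PXZ, obj V = ∑ z, V 0 z 1 * d z := fun V hV => by
    simp only [hobj, objective_eq_sum_off_diag_mul hV.2.1, hd]
  have hmin_nonneg : ∀ z, 0 ≤ min (PXZ 0 z) (PXZ 1 z) := fun z => le_min (hPXZ0 0 z) (hPXZ0 1 z)
  have hPZ_nonneg : ∀ z, 0 ≤ PZ z := fun z => by
    rw [hPZ, Fin.sum_univ_two]; exact add_nonneg (hPXZ0 0 z) (hPXZ0 1 z)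
  have hc_nonneg : ∀ z, 0 ≤ PZ z * (PXZ 0 z / PZ z) * (PXZ 1 z / PZ z) := fun z => by
    have := hPXZ0 0 z; have := hPXZ0 1 z; have := hPZ_nonneg z; positivity
  have hc_eq_zero : ∀ z,
      PZ z * (PXZ 0 z / PZ z) * (PXZ 1 z / PZ z) = 0 ↔ min (PXZ 0 z) (PXZ 1 z) = 0 := fun z => by
    rw [hPZ, Fin.sum_univ_two, add_mul_div_add_mul_div_add_eq_zero_iff (hPXZ0 0 z) (hPXZ0 1 z),
      min_eq_zero_iff_mul_eq_zero (hPXZ0 0 z) (hPXZ0 1 z)]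
  set a : Z → ℝ := fun z => if d z < 0 then min (PXZ 0 z) (PXZ 1 z) else 0
  have ha_mem : offDiagCoupling PXZ a ∈ symmetricCouplings PXZ :=
    offDiagCoupling_mem_symmetricCouplings
      (fun z => by dsimp only [a]; split_ifs; exacts [hmin_nonneg z, le_rfl])
      (fun z => by dsimp only [a]; split_ifs; exacts [le_rfl, hmin_nonneg z])
  refine ⟨⟨⟨_, ha_mem, ?_⟩, ?_⟩, ?_, ?_⟩
  · rw [hobj_eq _ ha_mem, sum_filter]
    simp [offDiagCoupling, a, ite_mul]
  · rintro _ ⟨V, hV, rfl⟩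
    rw [hobj_eq V hV]
    exact sum_filter_neg_mul_le_sum_mul (fun z => (off_diag_mem_Icc_of_mem_symmetricCouplings hV z).1)
      (fun z => (off_diag_mem_Icc_of_mem_symmetricCouplings hV z).2)
  · rw [sum_filter_neg_mul_nonneg_iff hmin_nonneg, sum_filter_neg_mul_nonneg_iff hc_nonneg]
    simp only [hc_eq_zero]
  · rw [sum_filter_neg_mul_nonneg_iff hmin_nonneg]
    simp only [mul_nonneg_iff_neg_imp_eq_zero (hc_nonneg _), hc_eq_zero]

/-- Binary-input: removing the diagonal constraint changes the minimum to
Σ_{z : d_q(z)<0} min{P_{XZ}(0,z), P_{XZ}(1,z)}·d_q(z), but the nonnegativity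
condition is unchanged: both minima are ≥ 0 iff for all z,
P_Z(z)·P_{X|Z}(0|z)·P_{X|Z}(1|z)·d_q(z) ≥ 0. -/
theorem stmt_13 {Y Z : Type} [Fintype Y] [Fintype Z]
    (q : Fin 2 → Y → ℝ)
    (PXZ : Fin 2 → Z → ℝ) (hPXZ0 : ∀ x z, 0 ≤ PXZ x z)
    (hPXZ1 : ∑ x, ∑ z, PXZ x z = 1)
    (PY : Y → Fin 2 → Z → ℝ) (hPY0 : ∀ y x z, 0 ≤ PY y x z)
    (hPY1 : ∀ x z, ∑ y, PY y x z = 1)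
    (PZ : Z → ℝ) (hPZ : ∀ z, PZ z = ∑ x, PXZ x z)
    (d : Z → ℝ) (hd : ∀ z, d z = ∑ y, (PY y 0 z - PY y 1 z) * (q 1 y - q 0 y))
    (obj : (Fin 2 → Z → Fin 2 → ℝ) → ℝ)
    (hobj : ∀ V, obj V = ∑ xt, ∑ z, ∑ x, ∑ y, V xt z x * PY y x z * (q xt y - q x y))
    (feasU : Set (Fin 2 → Z → Fin 2 → ℝ))
    (hfeasU : feasU = {V | (∀ xt z x, 0 ≤ V xt z x) ∧
      (∀ xt z x, V xt z x = V x z xt) ∧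
      (∀ x z, ∑ xt, V xt z x = PXZ x z)})
    (S : ℝ)
    (hS : S = ∑ z ∈ Finset.univ.filter (fun z => d z < 0),
      PZ z * (PXZ 0 z / PZ z) * (PXZ 1 z / PZ z) * d z)
    (S' : ℝ)
    (hS' : S' = ∑ z ∈ Finset.univ.filter (fun z => d z < 0),
      min (PXZ 0 z) (PXZ 1 z) * d z) :
    IsLeast (obj '' feasU) S' ∧
      (0 ≤ S' ↔ 0 ≤ S) ∧
      (0 ≤ S' ↔ ∀ z, 0 ≤ PZ z * (PXZ 0 z / PZ z) * (PXZ 1 z / PZ z) * d z) :=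
  stmt_13_general q PXZ hPXZ0 PY PZ hPZ d hd obj hobj feasU hfeasU S hS S' hS'
end
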